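/- Let G be a finite group with a normal subgroup C such that G/C is cyclic, and let λ be a linear character of C and ψ ∈ Irr(G) lying over λ. Then ψ(1) equals the size of the orbit of λ under the action of G/C on the linear characters of C. Consequently, the set of irreducible character degrees of G/C′ equals the set of orbit-sizes of the action of G/C on the group of linear characters of C. -/

import Mathlib

open CategoryTheory
set_option linter.unusedSectionVars false
set_option maxHeartbeats 1000000



/-- The set of degrees of irreducible complex representations (= character degrees) of `G`. -/
noncomputable def cdSet (G : Type) [Monoid G] : Set ℕ :=
  {n | ∃ V : FDRep ℂ G, CategoryTheory.Simple V ∧ Module.finrank ℂ V = n}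

theorem charCongr {G : Type*} [Group G] {C : Subgroup G} (lam : ↥C →* ℂˣ)
    {x y : ↥C} (h : (x : G) = (y : G)) : lam x = lam y := by
  cases Subtype.ext h; rfl

/-- The conjugate of a linear character `lam` of a normal subgroup `C` by `g ∈ G`. -/
def conjChar {G : Type*} [Group G] {C : Subgroup G} (hC : C.Normal) (g : G)
    (lam : ↥C →* ℂˣ) : ↥C →* ℂˣ where
  toFun c := lam ⟨g⁻¹ * ↑c * g, by simpa using hC.conj_mem (↑c) c.2 g⁻¹⟩
  map_one' := (charCongr lam (by simp)).trans (map_one lam)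
  map_mul' a b := by
    rw [← map_mul]
    exact charCongr lam (by push_cast; group)


section A
variable {G : Type*} [Group G] {C : Subgroup G} (hC : C.Normal)

theorem conjChar_apply (g : G) (lam : ↥C →* ℂˣ) (c : ↥C) :
    conjChar hC g lam c = lam ⟨g⁻¹ * ↑c * g, by simpa using hC.conj_mem (↑c) c.2 g⁻¹⟩ := rfl

theorem conjChar_conjChar (g g' : G) (lam : ↥C →* ℂˣ) :
    conjChar hC g (conjChar hC g' lam) = conjChar hC (g * g') lam := by
  ext c
  simp only [conjChar_apply]
  refine congrArg Units.val (charCongr lam ?_)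
  push_cast; group

theorem conjChar_one (lam : ↥C →* ℂˣ) : conjChar hC 1 lam = lam := by
  ext c
  simp only [conjChar_apply]
  refine congrArg Units.val (charCongr lam ?_)
  push_cast; group

/-- membership in orbit is symmetric-transitive: orbits of conjugate chars agree -/
theorem orbit_eq_of_conj (g : G) (lam : ↥C →* ℂˣ) :
    {nu : ↥C →* ℂˣ | ∃ a : G, nu = conjChar hC a (conjChar hC g lam)} =
    {nu : ↥C →* ℂˣ | ∃ a : G, nu = conjChar hC a lam} := by
  ext nu
  constructor
  · rintro ⟨a, rfl⟩; exact ⟨a * g, (conjChar_conjChar hC a g lam)⟩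
  · rintro ⟨a, rfl⟩
    exact ⟨a * g⁻¹, by rw [conjChar_conjChar, inv_mul_cancel_right]⟩

/-- sum of a nontrivial linear character over a finite group vanishes -/
theorem sum_char_eq_zero {H : Type*} [Group H] [Fintype H] (chi : H →* ℂˣ) (h : chi ≠ 1) :
    ∑ c : H, (chi c : ℂ) = 0 := by
  obtain ⟨c₀, hc₀⟩ : ∃ c₀, chi c₀ ≠ 1 := by
    by_contra hcon
    push_neg at hcon
    exact h (MonoidHom.ext fun c => hcon c)
  have key : (chi c₀ : ℂ) * ∑ c : H, (chi c : ℂ) = ∑ c : H, (chi c : ℂ) := by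
    rw [Finset.mul_sum]
    rw [← Equiv.sum_comp (Equiv.mulLeft c₀) (fun c => (chi c : ℂ))]
    refine Finset.sum_congr rfl fun c _ => ?_
    simp [Equiv.mulLeft, ← Units.val_mul, ← map_mul]
  have : ((chi c₀ : ℂ) - 1) * ∑ c : H, (chi c : ℂ) = 0 := by ring_nf; rw [key]; ring
  rcases mul_eq_zero.mp this with h1 | h2
  · exact absurd (Units.ext (by push_cast [sub_eq_zero] at h1 ⊢; exact h1)) hc₀
  · exact h2
end A


section B
variable {G : Type} [Group G]

/-- The subrepresentation on an invariant submodule. -/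
noncomputable def subrep (V : FDRep ℂ G) (p : Submodule ℂ V)
    (hp : ∀ (g : G) (v : V), v ∈ p → V.ρ g v ∈ p) : FDRep ℂ G :=
  FDRep.of (V := ↥p)
    { toFun := fun g => (V.ρ g).restrict (fun v hv => hp g v hv)
      map_one' := by ext x; simp [LinearMap.restrict_apply]
      map_mul' := fun g h => by ext x; simp [LinearMap.restrict_apply] }

noncomputable def subrepIncl (V : FDRep ℂ G) (p : Submodule ℂ V)
    (hp : ∀ (g : G) (v : V), v ∈ p → V.ρ g v ∈ p) : subrep V p hp ⟶ V :=
  ⟨FGModuleCat.ofHom p.subtype, by intro g; rfl⟩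

theorem hom_equivariant {V W : FDRep ℂ G} (f : W ⟶ V) (g : G) (x : W) :
    V.ρ g ((f.hom.hom.hom : W →ₗ[ℂ] V) x) = (f.hom.hom.hom : W →ₗ[ℂ] V) (W.ρ g x) :=
  (congrFun (congrArg (fun (l : W.V ⟶ V.V) => (l : W → V)) (f.comm g)) x).symm

theorem hom_zero_iff {V W : FDRep ℂ G} (f : W ⟶ V) :
    f = 0 ↔ ∀ x : W, (f.hom.hom.hom : W →ₗ[ℂ] V) x = 0 := by
  constructor
  · intro h x; rw [h]; rfl
  · intro h; ext x; exact h x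

/-- From a simple `FDRep`, every invariant submodule is `⊥` or `⊤`. -/
theorem invariant_bot_or_top (V : FDRep ℂ G) (hV : Simple V) (p : Submodule ℂ V)
    (hp : ∀ (g : G) (v : V), v ∈ p → V.ρ g v ∈ p) : p = ⊥ ∨ p = ⊤ := by
  by_cases hbot : p = ⊥
  · exact Or.inl hbot
  right
  have : Mono (subrepIncl V p hp) := ConcreteCategory.mono_of_injective _ Subtype.val_injective
  have hne : subrepIncl V p hp ≠ 0 := by
    rw [Ne, hom_zero_iff]
    intro h
    apply hbot
    rw [Submodule.eq_bot_iff]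
    intro x hx
    exact h ⟨x, hx⟩
  have hiso : IsIso (subrepIncl V p hp) := isIso_of_mono_of_nonzero hne
  rw [Submodule.eq_top_iff']
  intro v
  have : ((inv (subrepIncl V p hp)) ≫ (subrepIncl V p hp)).hom v = v := by
    rw [IsIso.inv_hom_id]; rfl
  rw [← this]
  exact ((inv (subrepIncl V p hp)).hom v).2

/-- Simplicity from having no nontrivial invariant submodules. -/
theorem simple_of_invariant (V : FDRep ℂ G) (hne : ∃ v : V, v ≠ 0)
    (h : ∀ p : Submodule ℂ V, (∀ (g : G) (v : V), v ∈ p → V.ρ g v ∈ p) → p = ⊥ ∨ p = ⊤) :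
    Simple V := by
  constructor
  intro W f hm
  constructor
  · intro hiso h0
    obtain ⟨v, hv⟩ := hne
    apply hv
    have h1 : (inv f ≫ f).hom v = v := by rw [IsIso.inv_hom_id]; rfl
    have hz : inv f ≫ f = 0 := (congrArg (fun t => inv f ≫ t) h0).trans Limits.comp_zero
    rw [hz] at h1
    exact h1.symm
  · intro hf0
    have hrinv : ∀ (g : G) (v : V), v ∈ LinearMap.range (f.hom.hom.hom : W →ₗ[ℂ] V) →
        V.ρ g v ∈ LinearMap.range (f.hom.hom.hom : W →ₗ[ℂ] V) := by
      rintro g v ⟨x, rfl⟩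
      exact ⟨W.ρ g x, (hom_equivariant f g x).symm⟩
    have hr : LinearMap.range (f.hom.hom.hom : W →ₗ[ℂ] V) = ⊤ := by
      rcases h _ hrinv with hb | ht
      · exfalso
        apply hf0
        rw [hom_zero_iff]
        intro x
        have : (f.hom.hom.hom : W →ₗ[ℂ] V) x ∈ LinearMap.range (f.hom.hom.hom : W →ₗ[ℂ] V) := ⟨x, rfl⟩
        rw [hb] at this
        exact this
      · exact ht
    have hk : LinearMap.ker (f.hom.hom.hom : W →ₗ[ℂ] V) = ⊥ := by
      set k := LinearMap.ker (f.hom.hom.hom : W →ₗ[ℂ] V) with hkdef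
      have hkinv : ∀ (g : G) (v : W), v ∈ k → W.ρ g v ∈ k := by
        intro g v hv
        rw [hkdef, LinearMap.mem_ker] at hv ⊢
        show (f.hom.hom.hom : W →ₗ[ℂ] V) ((W.ρ g) v) = 0
        rw [← hom_equivariant f g v]
        show V.ρ g ((f.hom.hom.hom : W →ₗ[ℂ] V) v) = 0
        rw [show (f.hom.hom.hom : W →ₗ[ℂ] V) v = 0 from hv, map_zero]
      have hcomp : subrepIncl W k hkinv ≫ f = (0 : subrep W k hkinv ⟶ V) := by
        rw [hom_zero_iff]
        intro x
        exact x.2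
      have h0 : subrepIncl W k hkinv = 0 := by
        have := hcomp.trans (Limits.zero_comp (X := subrep W k hkinv) (f := f)).symm
        exact (cancel_mono f).mp this
      rw [hom_zero_iff] at h0
      rw [Submodule.eq_bot_iff]
      intro x hx
      exact h0 ⟨x, hx⟩
    have hb : Function.Bijective ((f.hom.hom.hom : W →ₗ[ℂ] V)) :=
      ⟨LinearMap.ker_eq_bot.mp hk, LinearMap.range_eq_top.mp hr⟩
    let e := LinearEquiv.ofBijective (f.hom.hom.hom : W →ₗ[ℂ] V) hb
    have he : ∀ x : W, e x = (f.hom.hom.hom : W →ₗ[ℂ] V) x := fun _ => rfl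
    refine ⟨⟨⟨FGModuleCat.ofHom e.symm.toLinearMap, ?_⟩, ?_, ?_⟩⟩
    · intro g
      ext v
      show e.symm ((V.ρ g) v) = (W.ρ g) (e.symm v)
      apply hb.injective
      show (f.hom.hom.hom : W →ₗ[ℂ] V) _ = (f.hom.hom.hom : W →ₗ[ℂ] V) _
      rw [← he, ← he, e.apply_symm_apply, he, ← hom_equivariant, ← he, e.apply_symm_apply]
    · ext x
      show e.symm ((f.hom.hom.hom : W →ₗ[ℂ] V) x) = x
      rw [← he, e.symm_apply_apply]
    · ext v
      show (f.hom.hom.hom : W →ₗ[ℂ] V) (e.symm v) = v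
      rw [← he, e.apply_symm_apply]

theorem simple_nontrivial (V : FDRep ℂ G) (hV : Simple V) : ∃ v : V, v ≠ 0 := by
  by_contra h
  push_neg at h
  apply id_nonzero V
  rw [hom_zero_iff]
  intro x
  rw [h x]
  exact h _
end B

section C
variable {U : Type*} [AddCommGroup U] [Module ℂ U] [FiniteDimensional ℂ U]

theorem exists_common_eigenvector_aux {ι : Type*} (Phi : ι → (U →ₗ[ℂ] U))
    (hcomm : ∀ i j, Commute (Phi i) (Phi j)) :
    ∀ (n : ℕ) (p : Submodule ℂ U), Module.finrank ℂ p = n → p ≠ ⊥ →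
      (∀ i, ∀ x ∈ p, Phi i x ∈ p) →
      ∃ x ∈ p, x ≠ 0 ∧ ∀ i, ∃ a : ℂ, Phi i x = a • x := by
  intro n
  induction n using Nat.strong_induction_on with
  | _ n IH =>
    intro p hpn hpbot hpinv
    by_cases hs : ∀ i, ∃ a : ℂ, ∀ x ∈ p, Phi i x = a • x
    · obtain ⟨x, hx, hx0⟩ := Submodule.exists_mem_ne_zero_of_ne_bot hpbot
      refine ⟨x, hx, hx0, fun i => ?_⟩
      obtain ⟨a, ha⟩ := hs i
      exact ⟨a, ha x hx⟩
    · push_neg at hs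
      obtain ⟨i₀, hi₀⟩ := hs
      have : Nontrivial ↥p := Submodule.nontrivial_iff_ne_bot.mpr hpbot
      obtain ⟨α, hα⟩ := Module.End.exists_eigenvalue ((Phi i₀).restrict (hpinv i₀))
      obtain ⟨y, hy⟩ := hα.exists_hasEigenvector
      have hmem : ∀ z : U, z ∈ LinearMap.ker (Phi i₀ - α • LinearMap.id) ↔ Phi i₀ z = α • z := by
        intro z
        rw [LinearMap.mem_ker, LinearMap.sub_apply, LinearMap.smul_apply, LinearMap.id_apply,
          sub_eq_zero]
      set p' : Submodule ℂ U := p ⊓ LinearMap.ker (Phi i₀ - α • LinearMap.id) with hp'def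
      have hyp' : (y : U) ∈ p' := by
        refine Submodule.mem_inf.mpr ⟨y.2, (hmem _).mpr ?_⟩
        have h2 := congrArg (Subtype.val : ↥p → U) (Module.End.HasEigenvector.apply_eq_smul hy)
        rw [LinearMap.restrict_apply] at h2
        exact h2.trans rfl
      have hp'bot : p' ≠ ⊥ := by
        intro hb
        apply hy.2
        have : (y : U) = 0 := by rw [hb] at hyp'; exact hyp'
        exact Subtype.ext this
      have hp'inv : ∀ i, ∀ x ∈ p', Phi i x ∈ p' := by
        intro i x hx
        obtain ⟨hx1, hx2⟩ := Submodule.mem_inf.mp hx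
        rw [hmem] at hx2
        refine Submodule.mem_inf.mpr ⟨hpinv i x hx1, (hmem _).mpr ?_⟩
        have := congrFun (congrArg (fun (l : U →ₗ[ℂ] U) => (l : U → U)) (hcomm i₀ i)) x
        simp only [Module.End.mul_apply] at this
        rw [this, hx2, map_smul]
      have hlt : p' < p := by
        rcases lt_or_eq_of_le (inf_le_left : p' ≤ p) with h | h
        · exact h
        · exfalso
          obtain ⟨x, hx, hne⟩ := hi₀ α
          apply hne
          have hx' : x ∈ p' := by rw [hp'def, h]; exact hx
          exact (hmem x).mp (Submodule.mem_inf.mp hx').2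
      have hrank : Module.finrank ℂ p' < n := hpn ▸ Submodule.finrank_lt_finrank_of_lt hlt
      obtain ⟨x, hx, hx0, hxe⟩ := IH _ hrank p' rfl hp'bot hp'inv
      exact ⟨x, (Submodule.mem_inf.mp hx).1, hx0, hxe⟩

theorem exists_common_eigenvector {ι : Type*} (Phi : ι → (U →ₗ[ℂ] U))
    (hcomm : ∀ i j, Commute (Phi i) (Phi j)) (hU : ∃ u : U, u ≠ 0) :
    ∃ x : U, x ≠ 0 ∧ ∀ i, ∃ a : ℂ, Phi i x = a • x := by
  have htop : (⊤ : Submodule ℂ U) ≠ ⊥ := by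
    obtain ⟨u, hu⟩ := hU
    intro h
    exact hu ((Submodule.eq_bot_iff _).mp h u trivial)
  obtain ⟨x, -, hx0, hxe⟩ := exists_common_eigenvector_aux Phi hcomm _ ⊤ rfl htop
    (fun i x _ => trivial)
  exact ⟨x, hx0, hxe⟩
end C

theorem rho_mul_apply {G : Type} [Group G] (V : FDRep ℂ G) (a b : G) (x : V) :
    V.ρ (a * b) x = V.ρ a (V.ρ b x) := by rw [map_mul]; rfl

theorem eq_zero_of_rho_eq_zero {G : Type} [Group G] (V : FDRep ℂ G) (g : G) (x : V)
    (h : V.ρ g x = 0) : x = 0 := by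
  have h2 := rho_mul_apply V g⁻¹ g x
  rw [h, map_zero, inv_mul_cancel, map_one] at h2
  simpa using h2

section D
variable {G : Type} [Group G] [Fintype G] {C : Subgroup G}

/-- transport of eigenvectors -/
theorem rho_conj_eigen (hC : C.Normal) (V : FDRep ℂ G) (nu : ↥C →* ℂˣ) (x : V)
    (hx : ∀ c : ↥C, V.ρ (c : G) x = (nu c : ℂ) • x) (g : G) (c : ↥C) :
    V.ρ (c : G) (V.ρ g x) = (conjChar hC g nu c : ℂ) • V.ρ g x := by
  have h1 : (c : G) * g = g * (g⁻¹ * c * g) := by group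
  rw [← rho_mul_apply, h1, rho_mul_apply]
  have h2 : ((⟨g⁻¹ * ↑c * g, by simpa using hC.conj_mem (↑c) c.2 g⁻¹⟩ : ↥C) : G)
      = g⁻¹ * ↑c * g := rfl
  rw [← h2, hx, map_smul]
  rfl

theorem core_dim (hC : C.Normal) (hcyc : IsCyclic (G ⧸ C)) (mu : ↥C →* ℂˣ)
    (V : FDRep ℂ G) (hV : Simple V)
    (hover : ∃ v : V, v ≠ 0 ∧ ∀ c : ↥C, V.ρ (c : G) v = (mu c : ℂ) • v) :
    Module.finrank ℂ V = Nat.card {nu : ↥C →* ℂˣ | ∃ g : G, nu = conjChar hC g mu} := by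
  classical
  obtain ⟨v, hv0, hv⟩ := hover
  -- the stabilizer subgroup
  let T : Subgroup G :=
    { carrier := {g | conjChar hC g mu = mu}
      one_mem' := conjChar_one hC mu
      mul_mem' := by
        intro a b ha hb
        show conjChar hC (a * b) mu = mu
        rw [← conjChar_conjChar, hb, ha]
      inv_mem' := by
        intro a ha
        show conjChar hC a⁻¹ mu = mu
        have h := conjChar_conjChar hC a⁻¹ a mu
        rw [inv_mul_cancel, conjChar_one] at h
        rw [ha] at h
        exact h }
  have memT : ∀ g : G, g ∈ T ↔ conjChar hC g mu = mu := fun g => Iff.rfl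
  have hcoset : ∀ a b : G, (QuotientGroup.mk a : G ⧸ T) = QuotientGroup.mk b ↔
      conjChar hC a mu = conjChar hC b mu := by
    intro a b
    rw [QuotientGroup.eq]
    constructor
    · intro h
      have h2 : conjChar hC a (conjChar hC (a⁻¹ * b) mu) = conjChar hC b mu := by
        rw [conjChar_conjChar, mul_inv_cancel_left]
      rw [(memT _).mp h] at h2
      exact h2
    · intro h
      show conjChar hC (a⁻¹ * b) mu = mu
      rw [← conjChar_conjChar, ← h, conjChar_conjChar, inv_mul_cancel, conjChar_one]
  haveI : Fintype (G ⧸ T) := Fintype.ofFinite _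
  -- orbit size = index of stabilizer
  have hcard : Nat.card {nu : ↥C →* ℂˣ | ∃ g : G, nu = conjChar hC g mu}
      = Fintype.card (G ⧸ T) := by
    rw [← Nat.card_eq_fintype_card]
    refine (Nat.card_congr (Equiv.ofBijective
      (fun x : G ⧸ T => (⟨conjChar hC x.out mu, x.out, rfl⟩ :
        {nu : ↥C →* ℂˣ | ∃ g : G, nu = conjChar hC g mu})) ⟨?_, ?_⟩)).symm
    · intro x y hxy
      have := (hcoset x.out y.out).mpr (congrArg Subtype.val hxy)
      rwa [QuotientGroup.out_eq', QuotientGroup.out_eq'] at this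
    · rintro ⟨nu, g, rfl⟩
      refine ⟨QuotientGroup.mk g, Subtype.ext ?_⟩
      show conjChar hC (QuotientGroup.mk g : G ⧸ T).out mu = conjChar hC g mu
      exact (hcoset _ _).mp (QuotientGroup.out_eq' _)
  -- LOWER BOUND
  let u : G ⧸ T → V := fun x => V.ρ x.out v
  have hu : ∀ (x : G ⧸ T) (c : ↥C),
      V.ρ (c : G) (u x) = (conjChar hC x.out mu c : ℂ) • u x :=
    fun x => rho_conj_eigen hC V mu v hv x.out
  have hune : ∀ x, u x ≠ 0 := by
    intro x h
    exact hv0 (eq_zero_of_rho_eq_zero V _ v h)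
  have hLI : LinearIndependent ℂ u := by
    rw [Fintype.linearIndependent_iff]
    intro a ha x₀
    set nu₀ := conjChar hC x₀.out mu with hnu₀
    set b : ↥C → ℂ := fun c => ((nu₀ c : ℂˣ) : ℂ)⁻¹ with hb
    have hsum : ∀ x : G ⧸ T,
        (∑ c : ↥C, b c • V.ρ (c : G) (u x))
          = (∑ c : ↥C, b c * ((conjChar hC x.out mu c : ℂˣ) : ℂ)) • u x := by
      intro x
      rw [Finset.sum_smul]
      refine Finset.sum_congr rfl fun c _ => ?_
      rw [hu x c, smul_smul]
    have hdelta : ∀ x : G ⧸ T,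
        (∑ c : ↥C, b c * ((conjChar hC x.out mu c : ℂˣ) : ℂ))
          = if x = x₀ then (Fintype.card ↥C : ℂ) else 0 := by
      intro x
      by_cases hx : x = x₀
      · subst hx
        rw [if_pos rfl]
        have h1 : ∀ c : ↥C, b c * ((conjChar hC x.out mu c : ℂˣ) : ℂ) = 1 := by
          intro c
          rw [hb]
          exact inv_mul_cancel₀ (Units.ne_zero _)
        rw [Finset.sum_congr rfl (fun c _ => h1 c), Finset.sum_const, nsmul_eq_mul, mul_one,
          Finset.card_univ]
      · rw [if_neg hx]
        have hne : nu₀⁻¹ * conjChar hC x.out mu ≠ 1 := by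
          intro h1
          apply hx
          have h2 : conjChar hC x.out mu = nu₀ := (inv_mul_eq_one.mp h1).symm
          have h3 := (hcoset x.out x₀.out).mpr (h2.trans hnu₀)
          rwa [QuotientGroup.out_eq', QuotientGroup.out_eq'] at h3
        have hz := sum_char_eq_zero (nu₀⁻¹ * conjChar hC x.out mu) hne
        rw [← hz]
        refine Finset.sum_congr rfl fun c _ => ?_
        rw [hb]
        show ((nu₀ c : ℂˣ) : ℂ)⁻¹ * _ = (((nu₀⁻¹ * conjChar hC x.out mu) c : ℂˣ) : ℂ)
        rw [MonoidHom.mul_apply, MonoidHom.inv_apply, Units.val_mul, ← Units.val_inv_eq_inv_val]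
    have hzero : (∑ c : ↥C, b c • V.ρ (c : G) (∑ x : G ⧸ T, a x • u x)) = 0 := by
      rw [ha]
      simp
    have hswap : (∑ c : ↥C, b c • V.ρ (c : G) (∑ x : G ⧸ T, a x • u x))
        = ∑ x : G ⧸ T, a x • (∑ c : ↥C, b c • V.ρ (c : G) (u x)) := by
      rw [Finset.sum_congr rfl (fun (c : ↥C) (_ : c ∈ Finset.univ) => by
        rw [map_sum, Finset.smul_sum])]
      rw [Finset.sum_comm]
      refine Finset.sum_congr rfl fun x _ => ?_
      rw [Finset.smul_sum]
      refine Finset.sum_congr rfl fun c _ => ?_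
      rw [map_smul, smul_comm]
    have hkey : a x₀ • ((Fintype.card ↥C : ℂ) • u x₀) = 0 := by
      rw [← hzero, hswap]
      rw [Finset.sum_congr rfl (fun x (_ : x ∈ Finset.univ) => by rw [hsum x, hdelta x])]
      rw [Fintype.sum_eq_single x₀ (fun x hx => by rw [if_neg hx, zero_smul, smul_zero])]
      rw [if_pos rfl]
    rcases smul_eq_zero.mp hkey with h1 | h2
    · exact h1
    · exfalso
      rcases smul_eq_zero.mp h2 with h3 | h4
      · exact (Nat.cast_ne_zero.mpr (Fintype.card_ne_zero : Fintype.card ↥C ≠ 0)) h3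
      · exact hune x₀ h4
  have hlow : Fintype.card (G ⧸ T) ≤ Module.finrank ℂ V := hLI.fintype_card_le_finrank
  -- UPPER BOUND
  -- C is contained in the stabilizer
  have hCT : ∀ c₀ : ↥C, (c₀ : G) ∈ T := by
    intro c₀
    rw [memT]
    ext c
    rw [conjChar_apply]
    refine congrArg Units.val ?_
    have h1 : (⟨(c₀ : G)⁻¹ * ↑c * ↑c₀, by simpa using hC.conj_mem (↑c) c.2 (↑c₀)⁻¹⟩ : ↥C)
        = c₀⁻¹ * c * c₀ := by
      apply Subtype.ext
      push_cast
      rfl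
    rw [h1, map_mul, map_mul, map_inv]
    rw [mul_comm ((mu c₀)⁻¹) (mu c), mul_assoc, inv_mul_cancel, mul_one]
  -- cyclic generator of the image of T in G ⧸ C
  haveI := hcyc
  obtain ⟨q, hq⟩ := IsCyclic.exists_generator (α := ↥(T.map (QuotientGroup.mk' C)))
  obtain ⟨t₀, ht₀T, ht₀q⟩ := q.2
  have hgen : ∀ s ∈ T, ∃ (k : ℤ) (c : ↥C), s = t₀ ^ k * (c : G) := by
    intro s hs
    obtain ⟨k, hk⟩ := hq (⟨QuotientGroup.mk s, ⟨s, hs, rfl⟩⟩ :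
      ↥(T.map (QuotientGroup.mk' C)))
    have hk2 : ((q : G ⧸ C) : G ⧸ C) ^ k = QuotientGroup.mk s := by
      have := congrArg Subtype.val hk
      push_cast at this
      exact this
    rw [← ht₀q] at hk2
    have hk3 : (QuotientGroup.mk (t₀ ^ k) : G ⧸ C) = QuotientGroup.mk s := by
      rw [← hk2]
      push_cast
      rfl
    have hk4 : (t₀ ^ k)⁻¹ * s ∈ C := QuotientGroup.eq.mp hk3
    exact ⟨k, ⟨(t₀ ^ k)⁻¹ * s, hk4⟩, by push_cast; group⟩
  -- the weight space of mu
  let Wm : Submodule ℂ V :=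
    { carrier := {x | ∀ c : ↥C, V.ρ (c : G) x = (mu c : ℂ) • x}
      add_mem' := by
        intro x y hx hy c
        rw [map_add, hx c, hy c, smul_add]
      zero_mem' := by
        intro c
        rw [map_zero, smul_zero]
      smul_mem' := by
        intro t x hx c
        rw [map_smul, hx c, smul_comm] }
  have hvW : v ∈ Wm := hv
  haveI : Nontrivial ↥Wm := ⟨⟨⟨v, hvW⟩, 0, fun h => hv0 (congrArg Subtype.val h)⟩⟩
  have hWinv : ∀ x ∈ Wm, V.ρ t₀ x ∈ Wm := by
    intro x hx c
    rw [rho_conj_eigen hC V mu x hx t₀ c, (memT t₀).mp ht₀T]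
  obtain ⟨α, hα⟩ := Module.End.exists_eigenvalue ((V.ρ t₀).restrict hWinv)
  obtain ⟨y, hy⟩ := hα.exists_hasEigenvector
  set w : V := (y : V) with hwdef
  have hw0 : w ≠ 0 := fun h => hy.2 (Subtype.ext h)
  have hwC : ∀ c : ↥C, V.ρ (c : G) w = (mu c : ℂ) • w := y.2
  have hwt : V.ρ t₀ w = α • w := by
    have h2 := congrArg (Subtype.val : ↥Wm → V) (Module.End.HasEigenvector.apply_eq_smul hy)
    rw [LinearMap.restrict_apply] at h2
    exact h2.trans rfl
  have hα0 : α ≠ 0 := by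
    intro h
    apply hw0
    apply eq_zero_of_rho_eq_zero V t₀
    rw [hwt, h, zero_smul]
  have hinj : ∀ g : G, Function.Injective (V.ρ g) := by
    intro g x1 x2 h
    have h2 : V.ρ g (x1 - x2) = 0 := by rw [map_sub, h, sub_self]
    exact sub_eq_zero.mp (eq_zero_of_rho_eq_zero V g _ h2)
  have hzpow : ∀ k : ℤ, V.ρ (t₀ ^ k) w = (α ^ k) • w := by
    have hnat : ∀ n : ℕ, V.ρ (t₀ ^ n) w = (α ^ n) • w := by
      intro n
      induction n with
      | zero => rw [pow_zero, pow_zero, map_one, one_smul]; rfl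
      | succ n ih =>
        rw [pow_succ, pow_succ, rho_mul_apply, hwt, map_smul, ih, smul_smul, mul_comm]
    intro k
    rcases k.eq_nat_or_neg with ⟨n, hn | hn⟩
    · subst hn
      rw [zpow_natCast, zpow_natCast]
      exact hnat n
    · subst hn
      apply hinj (t₀ ^ (n : ℤ))
      have h1 : V.ρ (t₀ ^ (n : ℤ)) (V.ρ (t₀ ^ (-(n : ℤ))) w) = w := by
        rw [← rho_mul_apply, ← zpow_add, add_neg_cancel, zpow_zero, map_one]
        rfl
      rw [h1, map_smul, zpow_natCast, hnat n, smul_smul, zpow_neg, zpow_natCast,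
        inv_mul_cancel₀ (pow_ne_zero n hα0), one_smul]
  -- the line spanned by w is T-invariant
  have hline : ∀ s ∈ T, ∃ β : ℂ, V.ρ s w = β • w := by
    intro s hs
    obtain ⟨k, c, rfl⟩ := hgen s hs
    refine ⟨(mu c : ℂ) * α ^ k, ?_⟩
    rw [rho_mul_apply, hwC c, map_smul, hzpow k, smul_smul, mul_comm]
  -- the G-span of the line
  let L : Submodule ℂ V := Submodule.span ℂ {w}
  let S : Submodule ℂ V := ⨆ g : G, Submodule.map (V.ρ g) L
  have hSinv : ∀ (g : G) (x : V), x ∈ S → V.ρ g x ∈ S := by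
    intro g x hx
    have hle : Submodule.map (V.ρ g) S ≤ S := by
      rw [Submodule.map_iSup]
      apply iSup_le
      intro g'
      rw [← Submodule.map_comp]
      have : V.ρ g ∘ₗ V.ρ g' = V.ρ (g * g') := by
        rw [map_mul]
        rfl
      rw [this]
      exact le_iSup (fun a : G => Submodule.map (V.ρ a) L) (g * g')
    exact hle ⟨x, hx, rfl⟩
  have hSne : S ≠ ⊥ := by
    intro h
    apply hw0
    have hw1 : w ∈ Submodule.map (V.ρ (1 : G)) L := by
      refine ⟨w, Submodule.mem_span_singleton_self w, ?_⟩
      rw [map_one]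
      rfl
    have hwS : w ∈ S := le_iSup (fun a : G => Submodule.map (V.ρ a) L) (1 : G) hw1
    rw [h] at hwS
    exact hwS
  have hStop : S = ⊤ := by
    rcases invariant_bot_or_top V hV S hSinv with h | h
    · exact absurd h hSne
    · exact h
  -- S is contained in the span of card (G ⧸ T) many vectors
  have hSle : S ≤ Submodule.span ℂ (Set.range (fun x : G ⧸ T => V.ρ x.out w)) := by
    apply iSup_le
    intro g
    rw [Submodule.map_span, Set.image_singleton, Submodule.span_le, Set.singleton_subset_iff]
    have hmk : (QuotientGroup.mk ((QuotientGroup.mk g : G ⧸ T).out) : G ⧸ T)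
        = QuotientGroup.mk g := QuotientGroup.out_eq' _
    have hmem : ((QuotientGroup.mk g : G ⧸ T).out)⁻¹ * g ∈ T := QuotientGroup.eq.mp hmk
    obtain ⟨β, hβ⟩ := hline _ hmem
    have hgw : V.ρ ((QuotientGroup.mk g : G ⧸ T).out * (((QuotientGroup.mk g : G ⧸ T).out)⁻¹ * g)) w
        = β • V.ρ ((QuotientGroup.mk g : G ⧸ T).out) w := by
      rw [rho_mul_apply, hβ, map_smul]
    rw [mul_inv_cancel_left] at hgw
    rw [hgw]
    exact Submodule.smul_mem _ β (Submodule.subset_span ⟨QuotientGroup.mk g, rfl⟩)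
  have hup : Module.finrank ℂ V ≤ Fintype.card (G ⧸ T) := by
    have hspan : Submodule.span ℂ (Set.range (fun x : G ⧸ T => V.ρ x.out w)) = ⊤ :=
      eq_top_iff.mpr (hStop ▸ hSle)
    have h1 : Module.finrank ℂ ↥(Submodule.span ℂ (Set.range (fun x : G ⧸ T => V.ρ x.out w)))
        ≤ (Set.range (fun x : G ⧸ T => V.ρ x.out w)).toFinset.card :=
      finrank_span_le_card _
    rw [hspan, finrank_top] at h1
    refine h1.trans ?_
    rw [Set.toFinset_range]
    exact (Finset.card_image_le).trans (le_of_eq (Finset.card_univ))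
  rw [hcard]
  exact le_antisymm hup hlow
end D

section E
open scoped commutatorElement
variable {G : Type} [Group G] {C : Subgroup G}

/-- Extract a character from a common eigenvector of the `C`-action. -/
theorem exists_eigen_char (V : FDRep ℂ G)
    (hcomm : ∀ c c' : ↥C, Commute (V.ρ (c : G)) (V.ρ (c' : G))) (hne : ∃ x : V, x ≠ 0) :
    ∃ (nu : ↥C →* ℂˣ) (x : V), x ≠ 0 ∧ ∀ c : ↥C, V.ρ (c : G) x = (nu c : ℂ) • x := by
  obtain ⟨x, hx0, hxe⟩ := exists_common_eigenvector (fun c : ↥C => V.ρ (c : G)) hcomm hne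
  choose a haeq using hxe
  have hun : ∀ b b' : ℂ, b • x = b' • x → b = b' := by
    intro b b' h
    exact smul_left_injective ℂ hx0 h
  have ha_ne : ∀ c : ↥C, a c ≠ 0 := by
    intro c h
    apply hx0
    apply eq_zero_of_rho_eq_zero V (c : G)
    rw [haeq c, h, zero_smul]
  have ha_one : a 1 = 1 := by
    apply hun
    rw [← haeq 1, one_smul]
    show V.ρ ((1 : ↥C) : G) x = x
    rw [Subgroup.coe_one, map_one]
    rfl
  have ha_mul : ∀ c c' : ↥C, a (c * c') = a c * a c' := by
    intro c c'
    apply hun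
    rw [← haeq (c * c')]
    show V.ρ ((c : G) * (c' : G)) x = (a c * a c') • x
    rw [rho_mul_apply, haeq c', map_smul, haeq c, smul_smul, mul_comm]
  refine ⟨{ toFun := fun c => Units.mk0 (a c) (ha_ne c)
            map_one' := Units.ext (by simpa using ha_one)
            map_mul' := fun c c' => Units.ext (by simpa using ha_mul c c') }, x, hx0, ?_⟩
  intro c
  exact haeq c

/-- A linear character kills (the image in `G` of) the commutator subgroup. -/
theorem char_kills_commutator (mu : ↥C →* ℂˣ) (z : ↥C)
    (hz : (z : G) ∈ Subgroup.map C.subtype (commutator ↥C)) : mu z = 1 := by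
  obtain ⟨w, hw, hwz⟩ := hz
  have hwz' : w = z := Subtype.ext hwz
  subst hwz'
  have hker : commutator ↥C ≤ mu.ker := by
    rw [commutator_def, Subgroup.commutator_le]
    intro g₁ _ g₂ _
    rw [MonoidHom.mem_ker, map_commutatorElement]
    exact commutatorElement_eq_one_iff_commute.mpr (mul_comm _ _)
  exact hker hw

/-- If the image of the commutator acts trivially then the `C`-operators commute. -/
theorem comm_of_commutator_trivial (V : FDRep ℂ G)
    (hN : ∀ d : G, d ∈ Subgroup.map C.subtype (commutator ↥C) → V.ρ d = 1)
    (c c' : ↥C) : Commute (V.ρ (c : G)) (V.ρ (c' : G)) := by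
  have hmem : ⁅(c : G), (c' : G)⁆ ∈ Subgroup.map C.subtype (commutator ↥C) := by
    refine ⟨⁅c, c'⁆, Subgroup.commutator_mem_commutator (Subgroup.mem_top c)
      (Subgroup.mem_top c'), ?_⟩
    show (↑(c * c' * c⁻¹ * c'⁻¹) : G) = _
    push_cast
    rfl
  have key : (c : G) * (c' : G) = ⁅(c : G), (c' : G)⁆ * ((c' : G) * (c : G)) := by group
  show V.ρ (c : G) * V.ρ (c' : G) = V.ρ (c' : G) * V.ρ (c : G)
  rw [← map_mul, ← map_mul, key, map_mul, hN _ hmem, one_mul]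

end E

section F
variable {G : Type} [Group G] (N : Subgroup G) [hN : N.Normal]

/-- Descend a representation trivial on `N` to the quotient. -/
noncomputable def quotRep (V : FDRep ℂ G) (h : ∀ d : G, d ∈ N → V.ρ d = 1) :
    FDRep ℂ (G ⧸ N) :=
  FDRep.of (V := V)
    (QuotientGroup.lift N V.ρ (fun d hd => by rw [MonoidHom.mem_ker]; exact h d hd))

theorem quotRep_mk (V : FDRep ℂ G) (h) (g : G) :
    (quotRep N V h).ρ (QuotientGroup.mk g) = V.ρ g := rfl

/-- Pull back a representation of the quotient. -/
noncomputable def pullRep (X : FDRep ℂ (G ⧸ N)) : FDRep ℂ G :=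
  FDRep.of (V := X) (X.ρ.comp (QuotientGroup.mk' N))

theorem pullRep_apply (X : FDRep ℂ (G ⧸ N)) (g : G) :
    (pullRep N X).ρ g = X.ρ (QuotientGroup.mk g) := rfl
end F

section T
variable {G : Type} [Group G] (N : Subgroup G) [hN : N.Normal]

theorem simple_pullRep (X : FDRep ℂ (G ⧸ N)) (hX : Simple X) : Simple (pullRep N X) := by
  apply simple_of_invariant
  · obtain ⟨x, hx⟩ := simple_nontrivial X hX
    exact ⟨x, hx⟩
  · intro p hp
    apply invariant_bot_or_top X hX p
    intro q v hv
    induction q using QuotientGroup.induction_on with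
    | _ g => exact hp g v hv

theorem simple_quotRep (V : FDRep ℂ G) (h : ∀ d : G, d ∈ N → V.ρ d = 1) (hV : Simple V) :
    Simple (quotRep N V h) := by
  apply simple_of_invariant
  · obtain ⟨x, hx⟩ := simple_nontrivial V hV
    exact ⟨x, hx⟩
  · intro p hp
    apply invariant_bot_or_top V hV p
    intro g v hv
    exact hp (QuotientGroup.mk g) v hv
end T


/-- Let `C ⊴ G` with `G/C` cyclic, `lam` a linear character of `C`, and `V` an irreducible
complex representation of `G` lying over `lam`.  Then `dim V` is the size of the `G`-orbit of
`lam`, and the character degrees of `G/C′` are exactly the `G`-orbit sizes on the linear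
characters of `C`. -/
theorem stmt_11 {G : Type} [Group G] [Fintype G] (C : Subgroup G) [hC : C.Normal]
    [hD : (Subgroup.map C.subtype (commutator ↥C)).Normal]
    (hcyc : IsCyclic (G ⧸ C))
    (lam : ↥C →* ℂˣ)
    (V : FDRep ℂ G) (hV : CategoryTheory.Simple V)
    (hover : ∃ v : V, v ≠ 0 ∧ ∀ c : ↥C, V.ρ (c : G) v = (lam c : ℂ) • v) :
    Module.finrank ℂ V = Nat.card {mu : ↥C →* ℂˣ | ∃ g : G, mu = conjChar hC g lam} ∧
    cdSet (G ⧸ Subgroup.map C.subtype (commutator ↥C)) =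
      {n : ℕ | ∃ mu : ↥C →* ℂˣ,
        Nat.card {nu : ↥C →* ℂˣ | ∃ g : G, nu = conjChar hC g mu} = n} := by
  classical
  set N := Subgroup.map C.subtype (commutator ↥C) with hNdef
  have hNC : N ≤ C := by
    rintro _ ⟨w, -, rfl⟩
    exact w.2
  constructor
  · exact core_dim hC hcyc lam V hV hover
  · ext n
    simp only [cdSet, Set.mem_setOf_eq]
    constructor
    · -- every degree of G ⧸ N is an orbit size
      rintro ⟨X, hX, rfl⟩
      have hsimple : Simple (pullRep N X) := simple_pullRep N X hX
      have hcomm : ∀ c c' : ↥C,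
          Commute ((pullRep N X).ρ (c : G)) ((pullRep N X).ρ (c' : G)) := by
        apply comm_of_commutator_trivial
        intro d hd
        rw [pullRep_apply, (QuotientGroup.eq_one_iff d).mpr hd, map_one]; rfl
      have hne : ∃ x : pullRep N X, x ≠ 0 := simple_nontrivial X hX
      obtain ⟨nu, x, hx0, hxe⟩ := exists_eigen_char (pullRep N X) hcomm hne
      have hdim := core_dim hC hcyc nu (pullRep N X) hsimple ⟨x, hx0, hxe⟩
      exact ⟨nu, hdim.symm⟩
    · -- every orbit size is a degree of G ⧸ N
      rintro ⟨mu, rfl⟩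
      -- the function-space representation
      let τ : Representation ℂ G (G → ℂ) :=
        { toFun := fun g =>
            { toFun := fun f x => f (x * g)
              map_add' := fun f f' => rfl
              map_smul' := fun t f => rfl }
          map_one' := LinearMap.ext fun f => funext fun x => congrArg f (mul_one x)
          map_mul' := fun a b => LinearMap.ext fun f => funext fun x =>
            (congrArg f (mul_assoc x a b)).symm }
      let Y : Submodule ℂ (G → ℂ) :=
        { carrier := {f | ∀ (c : ↥C) (x : G), f ((c : G) * x) = (mu c : ℂ) * f x}
          add_mem' := by
            intro f f' hf hf' c x
            show f _ + f' _ = _ * (f x + f' x)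
            rw [hf c x, hf' c x]
            ring
          zero_mem' := by
            intro c x
            show (0 : ℂ) = _ * 0
            ring
          smul_mem' := by
            intro t f hf c x
            show t * f _ = _ * (t * f x)
            rw [hf c x]
            ring }
      have hYinv : ∀ (g : G) (f : G → ℂ), f ∈ Y → τ g f ∈ Y := by
        intro g f hf c x
        show f (((c : G) * x) * g) = (mu c : ℂ) * f (x * g)
        rw [mul_assoc]
        exact hf c (x * g)
      let τres : Representation ℂ G ↥Y :=
        { toFun := fun g => (τ g).restrict (fun f hf => hYinv g f hf)
          map_one' := by ext z; simp [LinearMap.restrict_apply]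
          map_mul' := fun a b => by ext z; simp [LinearMap.restrict_apply] }
      let Yrep : FDRep ℂ G := FDRep.of τres
      -- the distinguished nonzero element of Y
      let f₀ : G → ℂ := fun x => if h : x ∈ C then (mu ⟨x, h⟩ : ℂ) else 0
      have hf₀Y : f₀ ∈ Y := by
        intro c x
        by_cases h : x ∈ C
        · have hcx : (c : G) * x ∈ C := C.mul_mem c.2 h
          show dite _ _ _ = _
          rw [dif_pos hcx, show f₀ x = (mu ⟨x, h⟩ : ℂ) from dif_pos h]
          have : (⟨(c : G) * x, hcx⟩ : ↥C) = c * ⟨x, h⟩ := by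
            apply Subtype.ext
            rfl
          rw [this, map_mul]
          push_cast
          ring
        · have hcx : (c : G) * x ∉ C := by
            intro hmem
            apply h
            have : x = (c : G)⁻¹ * ((c : G) * x) := by group
            rw [this]
            exact C.mul_mem (C.inv_mem c.2) hmem
          show dite _ _ _ = _
          rw [dif_neg hcx, show f₀ x = 0 from dif_neg h]
          ring
      have hf₀ne : f₀ ≠ 0 := by
        intro h
        have h1 : f₀ 1 = 0 := by rw [h]; rfl
        rw [show f₀ 1 = (mu ⟨1, C.one_mem⟩ : ℂ) from dif_pos C.one_mem] at h1
        have : (⟨1, C.one_mem⟩ : ↥C) = 1 := rfl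
        rw [this, map_one] at h1
        exact one_ne_zero h1
      haveI : Nontrivial ↥Y := ⟨⟨⟨f₀, hf₀Y⟩, 0, fun h => hf₀ne (congrArg Subtype.val h)⟩⟩
      -- N acts trivially on Y
      have hNtriv : ∀ d : G, d ∈ N → Yrep.ρ d = 1 := by
        intro d hd
        apply LinearMap.ext
        intro z
        apply Subtype.ext
        funext x
        show z.1 (x * d) = z.1 x
        have hconj : x * d * x⁻¹ ∈ N := hD.conj_mem d hd x
        have hxd : x * d = ((⟨x * d * x⁻¹, hNC hconj⟩ : ↥C) : G) * x := by
          push_cast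
          group
        rw [hxd, z.2 ⟨x * d * x⁻¹, hNC hconj⟩ x,
          char_kills_commutator mu ⟨x * d * x⁻¹, hNC hconj⟩ hconj]
        push_cast
        ring
      -- a minimal invariant submodule
      let S : Set (Submodule ℂ ↥Y) := {p | p ≠ ⊥ ∧ ∀ (g : G) (f : ↥Y), f ∈ p → Yrep.ρ g f ∈ p}
      have htopne : (⊤ : Submodule ℂ ↥Y) ≠ ⊥ := by
        intro h
        exact hf₀ne (congrArg Subtype.val ((Submodule.eq_bot_iff _).mp h ⟨f₀, hf₀Y⟩ trivial))
      have htopS : (⊤ : Submodule ℂ ↥Y) ∈ S := ⟨htopne, fun _ _ _ => trivial⟩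
      have hSne : {k | ∃ p ∈ S, Module.finrank ℂ p = k}.Nonempty :=
        ⟨_, ⊤, htopS, rfl⟩
      obtain ⟨U, hUS, hUrank⟩ := Nat.sInf_mem hSne
      have hmin : ∀ q ∈ S, Module.finrank ℂ U ≤ Module.finrank ℂ q := by
        intro q hq
        rw [hUrank]
        exact Nat.sInf_le ⟨q, hq, rfl⟩
      let Urep : FDRep ℂ G := subrep Yrep U hUS.2
      have hUne : ∃ z : Urep, z ≠ 0 := by
        obtain ⟨x, hx, hx0⟩ := Submodule.exists_mem_ne_zero_of_ne_bot hUS.1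
        exact ⟨⟨x, hx⟩, fun h => hx0 (congrArg Subtype.val h)⟩
      have hUsimple : Simple Urep := by
        apply simple_of_invariant _ hUne
        intro p hp
        by_cases hpbot : p = ⊥
        · exact Or.inl hpbot
        right
        set p' : Submodule ℂ ↥Y := p.map U.subtype with hp'def
        have hp'S : p' ∈ S := by
          constructor
          · obtain ⟨z, hz, hz0⟩ := Submodule.exists_mem_ne_zero_of_ne_bot hpbot
            intro hb
            apply hz0
            have : z.1 ∈ p' := ⟨z, hz, rfl⟩
            rw [hb] at this
            exact Subtype.ext this
          · rintro g f ⟨z, hz, rfl⟩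
            exact ⟨Urep.ρ g z, hp g z hz, rfl⟩
        have hle : p' ≤ U := Submodule.map_subtype_le U p
        have : p' = U := Submodule.eq_of_le_of_finrank_le hle (hmin p' hp'S)
        have htop : p.map U.subtype = (⊤ : Submodule ℂ ↥U).map U.subtype := by
          rw [Submodule.map_top, Submodule.range_subtype]
          exact this
        exact Submodule.map_injective_of_injective U.injective_subtype htop
      have hUtriv : ∀ d : G, d ∈ N → Urep.ρ d = 1 := by
        intro d hd
        apply LinearMap.ext
        intro z
        apply Subtype.ext
        show Yrep.ρ d z.1 = z.1
        rw [hNtriv d hd]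
        rfl
      obtain ⟨nu, z, hz0, hze⟩ := exists_eigen_char Urep
        (comm_of_commutator_trivial Urep hUtriv) hUne
      -- identify nu as a conjugate of mu
      have hF0 : (z.1.1 : G → ℂ) ≠ 0 := by
        intro h
        exact hz0 (Subtype.ext (Subtype.ext h))
      obtain ⟨g₀, hg₀⟩ := Function.ne_iff.mp hF0
      have heval : ∀ c : ↥C, (z.1.1 : G → ℂ) (g₀ * (c : G))
          = (nu c : ℂ) * (z.1.1 : G → ℂ) g₀ := by
        intro c
        have h3 := congrFun (congrArg (fun t : CoeSort.coe Urep => (t.1.1 : G → ℂ)) (hze c)) g₀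
        exact h3
      have hnumu : nu = conjChar hC g₀⁻¹ mu := by
        ext c
        refine congrArg Units.val ?_
        apply Units.ext
        have hconj : g₀ * (c : G) * g₀⁻¹ ∈ C := hC.conj_mem (c : G) c.2 g₀
        have hk : g₀ * (c : G) = ((⟨g₀ * (c : G) * g₀⁻¹, hconj⟩ : ↥C) : G) * g₀ := by
          push_cast
          group
        have h5 := heval c
        rw [hk, z.1.2 ⟨g₀ * (c : G) * g₀⁻¹, hconj⟩ g₀] at h5
        have h6 : (mu ⟨g₀ * (c : G) * g₀⁻¹, hconj⟩ : ℂ) = (nu c : ℂ) :=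
          mul_right_cancel₀ hg₀ h5
        rw [conjChar_apply hC g₀⁻¹ mu c]
        rw [← h6]
        refine congrArg Units.val (charCongr mu ?_)
        push_cast
        group
      have horb : {nu' : ↥C →* ℂˣ | ∃ g : G, nu' = conjChar hC g nu}
          = {nu' : ↥C →* ℂˣ | ∃ g : G, nu' = conjChar hC g mu} := by
        rw [hnumu]
        exact orbit_eq_of_conj hC g₀⁻¹ mu
      have hdim := core_dim hC hcyc nu Urep hUsimple ⟨z, hz0, hze⟩
      refine ⟨quotRep N Urep hUtriv, ?_, ?_⟩
      · refine simple_of_invariant _ ?_ ?_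
        · obtain ⟨z0, hz0'⟩ := hUne
          exact ⟨z0, hz0'⟩
        intro p hp
        apply invariant_bot_or_top Urep hUsimple p
        intro g v hv
        exact hp (QuotientGroup.mk g) v hv
      · rw [← horb]
        exact hdim
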